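/- Let λ, μ > 0 and γ > 0, and consider the 4×4 real matrix J with rows (λ², μ/γ, 0, 0), (μ, 0, 0, 0), (0, 0, λ², μ/γ), (0, 0, μ, 0). Then the spectral radius of J is larger than one if and only if λ² + μ²/γ > 1. Equivalently, the quadratic z² − λ²z − μ²/γ has a root of absolute value greater than 1 if and only if λ² + μ²/γ > 1. -/

import Mathlib

/-!
The Jacobian is block diagonal with two copies of the `2 × 2` block `[[λ², μ/γ], [μ, 0]]`, so its
eigenvalues are the roots of `z² - λ² z - μ²/γ`. With `a = λ² ≥ 0` and `c = μ²/γ ≥ 0` these roots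
are real, `r₋ ≤ 0 ≤ r₊` and `|r₋| ≤ r₊`, so the spectral radius is `r₊`. Evaluating
`(z - r₊)(z - r₋)` at `z = 1` gives `(1 - r₊)(1 - r₋) = 1 - (a + c)` with `1 - r₋ > 0`,
hence `r₊ > 1 ↔ a + c > 1`.
-/

section QuadraticRoots

variable {a c : ℝ}

/-- The roots of `x² - a x - c`. -/
noncomputable def rootPlus (a c : ℝ) : ℝ := (a + √(a ^ 2 + 4 * c)) / 2

noncomputable def rootMinus (a c : ℝ) : ℝ := (a - √(a ^ 2 + 4 * c)) / 2

theorem sub_rootPlus_mul_sub_rootMinus (hd : 0 ≤ a ^ 2 + 4 * c) (x : ℝ) :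
    (x - rootPlus a c) * (x - rootMinus a c) = x ^ 2 - a * x - c := by
  have hs := Real.sq_sqrt hd
  unfold rootPlus rootMinus
  linear_combination (-1 / 4 : ℝ) * hs

theorem quadratic_eq_zero_iff_eq_rootPlus_or_eq_rootMinus (hd : 0 ≤ a ^ 2 + 4 * c) (z : ℂ) :
    z ^ 2 - a * z - c = 0 ↔ z = rootPlus a c ∨ z = rootMinus a c := by
  have hfactor : z ^ 2 - a * z - c = (z - rootPlus a c) * (z - rootMinus a c) := by
    have h := congrArg ((↑) : ℝ → ℂ) (sub_rootPlus_mul_sub_rootMinus hd 0)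
    have hs : ((rootPlus a c : ℝ) : ℂ) + rootMinus a c = a := by
      unfold rootPlus rootMinus; push_cast; ring
    push_cast at h
    linear_combination (-1 : ℂ) * h + z * hs
  rw [hfactor, mul_eq_zero, sub_eq_zero, sub_eq_zero]

theorem rootMinus_nonpos (hc : 0 ≤ c) : rootMinus a c ≤ 0 := by
  have : |a| ≤ √(a ^ 2 + 4 * c) := Real.abs_le_sqrt (by linarith)
  unfold rootMinus
  linarith [le_abs_self a]

theorem abs_rootMinus_le_rootPlus (ha : 0 ≤ a) (hc : 0 ≤ c) :
    |rootMinus a c| ≤ rootPlus a c := by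
  rw [abs_of_nonpos (rootMinus_nonpos hc)]
  unfold rootMinus rootPlus
  linarith

theorem one_lt_rootPlus_iff (hc : 0 ≤ c) : 1 < rootPlus a c ↔ 1 < a + c := by
  have hd : 0 ≤ a ^ 2 + 4 * c := by positivity
  have hvalue := sub_rootPlus_mul_sub_rootMinus hd 1
  have hminus : 0 < 1 - rootMinus a c := by linarith [rootMinus_nonpos (a := a) hc]
  constructor
  · intro h; nlinarith
  · intro h; by_contra! hle; nlinarith

theorem isGreatest_norm_quadratic_roots (ha : 0 ≤ a) (hc : 0 ≤ c) :
    IsGreatest {r : ℝ | ∃ z ∈ {z : ℂ | z ^ 2 - a * z - c = 0}, r = ‖z‖} (rootPlus a c) := by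
  have hd : 0 ≤ a ^ 2 + 4 * c := by positivity
  have hplus : 0 ≤ rootPlus a c := (abs_nonneg _).trans (abs_rootMinus_le_rootPlus ha hc)
  have hroot := (quadratic_eq_zero_iff_eq_rootPlus_or_eq_rootMinus hd (rootPlus a c)).2 (.inl rfl)
  refine ⟨⟨rootPlus a c, hroot, ?_⟩, ?_⟩
  · rw [Complex.norm_real, Real.norm_of_nonneg hplus]
  · rintro r ⟨z, hz, rfl⟩
    rcases (quadratic_eq_zero_iff_eq_rootPlus_or_eq_rootMinus hd z).1 hz with rfl | rfl
    · rw [Complex.norm_real, Real.norm_of_nonneg hplus]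
    · rw [Complex.norm_real, Real.norm_eq_abs]
      exact abs_rootMinus_le_rootPlus ha hc

end QuadraticRoots

theorem det_algebraMap_sub_twoBlock {R : Type*} [CommRing R] (a b c z : R) :
    (algebraMap R (Matrix (Fin 4) (Fin 4) R) z -
      !![a, b, 0, 0; c, 0, 0, 0; 0, 0, a, b; 0, 0, c, 0]).det = (z ^ 2 - a * z - b * c) ^ 2 := by
  simp [Matrix.det_succ_row_zero, Fin.sum_univ_succ, Matrix.algebraMap_matrix_apply,
    Fin.succAbove]
  ring

theorem spectrum_twoBlock {K : Type*} [Field K] (a b c : K) :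
    spectrum K !![a, b, 0, 0; c, 0, 0, 0; 0, 0, a, b; 0, 0, c, 0] =
      {z | z ^ 2 - a * z - b * c = 0} := by
  ext z
  rw [spectrum.mem_iff, Matrix.isUnit_iff_isUnit_det, det_algebraMap_sub_twoBlock,
    isUnit_iff_ne_zero, not_ne_iff, pow_eq_zero_iff two_ne_zero, Set.mem_ofPred_eq]

theorem density_evolution_instability_general (lam mu gamma : ℝ)
    (hgamma : 0 < gamma) :
    ((1 : ℝ) < sSup {r : ℝ | ∃ z ∈ spectrum ℂ
        (!![(lam : ℂ) ^ 2, (mu : ℂ) / (gamma : ℂ), 0, 0;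
            (mu : ℂ), 0, 0, 0;
            0, 0, (lam : ℂ) ^ 2, (mu : ℂ) / (gamma : ℂ);
            0, 0, (mu : ℂ), 0] : Matrix (Fin 4) (Fin 4) ℂ), r = ‖z‖}
      ↔ 1 < lam ^ 2 + mu ^ 2 / gamma) ∧
    ((∃ z : ℂ, z ^ 2 - (lam : ℂ) ^ 2 * z - (mu : ℂ) ^ 2 / (gamma : ℂ) = 0
        ∧ 1 < ‖z‖)
      ↔ 1 < lam ^ 2 + mu ^ 2 / gamma) := by
  have hc : 0 ≤ mu ^ 2 / gamma := by positivity
  have hlam : (lam : ℂ) ^ 2 = ((lam ^ 2 : ℝ) : ℂ) := by push_cast; rfl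
  have hoffDiag : (mu : ℂ) / gamma * mu = ((mu ^ 2 / gamma : ℝ) : ℂ) := by push_cast; ring
  have hconst : (mu : ℂ) ^ 2 / gamma = ((mu ^ 2 / gamma : ℝ) : ℂ) := by push_cast; rfl
  have hmax := isGreatest_norm_quadratic_roots (sq_nonneg lam) hc
  rw [spectrum_twoBlock, hoffDiag, hlam, hconst, hmax.csSup_eq, ← one_lt_rootPlus_iff hc]
  refine ⟨Iff.rfl, ⟨fun ⟨z, hz, hnorm⟩ => hnorm.trans_le (hmax.2 ⟨z, hz, rfl⟩), fun h => ?_⟩⟩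
  obtain ⟨z, hz, hnorm⟩ := hmax.1
  exact ⟨z, hz, hnorm ▸ h⟩

/-- Lemma 4 / Lemma `densityevolutioninstability`. The Jacobian at
zero of the density-evolution moment map has spectral radius larger than one iff
`λ² + μ²/γ > 1`; equivalently, the quadratic `z² − λ²z − μ²/γ` has a root of absolute
value greater than one iff `λ² + μ²/γ > 1`. -/
theorem density_evolution_instability (lam mu gamma : ℝ)
    (hlam : 0 < lam) (hmu : 0 < mu) (hgamma : 0 < gamma) :
    ((1 : ℝ) < sSup {r : ℝ | ∃ z ∈ spectrum ℂ
        (!![(lam : ℂ) ^ 2, (mu : ℂ) / (gamma : ℂ), 0, 0;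
            (mu : ℂ), 0, 0, 0;
            0, 0, (lam : ℂ) ^ 2, (mu : ℂ) / (gamma : ℂ);
            0, 0, (mu : ℂ), 0] : Matrix (Fin 4) (Fin 4) ℂ), r = ‖z‖}
      ↔ 1 < lam ^ 2 + mu ^ 2 / gamma) ∧
    ((∃ z : ℂ, z ^ 2 - (lam : ℂ) ^ 2 * z - (mu : ℂ) ^ 2 / (gamma : ℂ) = 0
        ∧ 1 < ‖z‖)
      ↔ 1 < lam ^ 2 + mu ^ 2 / gamma) :=
  density_evolution_instability_general lam mu gamma hgamma
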